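/- arXiv:1506.02262 — 2 statements merged into one kernel-verified Lean document; each statement's English description precedes it below -/
import Mathlib

section
/- Let a₁, a₂, μ₁, μ₂, β > 0 and let (u_n, v_n) be a sequence in S_{a₁} × S_{a₂} such that J(u_n, v_n) → c for some c > 0 and G(u_n, v_n) → 0 as n → ∞. Then (u_n, v_n) is bounded in H¹(ℝ³, ℝ²), and there exists a constant C̄ > 0 such that ∫ (|∇u_n|² + |∇v_n|²) ≥ C̄ for all sufficiently large n. -/
/-!
Since `6 J − 2 G` is exactly the kinetic energy `A = ∫ (|∇u|² + |∇v|²)` (the quartic terms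
cancel), `A(uₙ, vₙ) → 6c`. This bounds the `H¹` norms, the `L²` masses being fixed, and gives
`A(uₙ, vₙ) ≥ 3c` for large `n`.
-/

open MeasureTheory Real Filter Topology

noncomputable section

abbrev E3 : Type := EuclideanSpace ℝ (Fin 3)

def lap (u : E3 → ℝ) (x : E3) : ℝ :=
  ∑ i : Fin 3,
    fderiv ℝ (fun y => fderiv ℝ u y (EuclideanSpace.single i 1)) x (EuclideanSpace.single i 1)

def InH1 (u : E3 → ℝ) : Prop :=
  MemLp u 2 volume ∧ MemLp (fun x => gradient u x) 2 volume

def IsRadial (u : E3 → ℝ) : Prop := ∀ x y : E3, ‖x‖ = ‖y‖ → u x = u y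

def sStar (s : ℝ) (w : E3 → ℝ) : E3 → ℝ := fun x => Real.exp (3 * s / 2) * w (Real.exp s • x)

def Ifun (μ : ℝ) (w : E3 → ℝ) : ℝ :=
  ∫ x, ((1 / 2) * ‖gradient w x‖ ^ 2 - (μ / 4) * w x ^ 4)

def J2 (μ₁ μ₂ β : ℝ) (u v : E3 → ℝ) : ℝ :=
  (∫ x, ((1 / 2) * ‖gradient u x‖ ^ 2 - (μ₁ / 4) * u x ^ 4))
    + (∫ x, ((1 / 2) * ‖gradient v x‖ ^ 2 - (μ₂ / 4) * v x ^ 4))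
    - (β / 2) * ∫ x, u x ^ 2 * v x ^ 2

def G2 (μ₁ μ₂ β : ℝ) (u v : E3 → ℝ) : ℝ :=
  (∫ x, (‖gradient u x‖ ^ 2 + ‖gradient v x‖ ^ 2))
    - (3 / 4) * ∫ x, (μ₁ * u x ^ 4 + 2 * β * u x ^ 2 * v x ^ 2 + μ₂ * v x ^ 4)

def IsW0 (w : E3 → ℝ) : Prop :=
  InH1 w ∧ IsRadial w ∧ (∀ x, 0 < w x) ∧ (∀ x, w x ≤ w 0) ∧
    (∀ x, -lap w x + w x = w x ^ 3)

def wStar (C₀ a μ : ℝ) (w0 : E3 → ℝ) : E3 → ℝ :=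
  fun x => (C₀ / (μ ^ ((3:ℝ)/2) * a ^ 2)) * w0 ((C₀ / (μ * a ^ 2)) • x)

def ell (w0 : E3 → ℝ) (a μ : ℝ) : ℝ :=
  (∫ x, w0 x ^ 2) * (∫ x, w0 x ^ 4) / (8 * μ ^ 2 * a ^ 2)

def InP (a μ : ℝ) (w : E3 → ℝ) : Prop :=
  InH1 w ∧ (∫ x, w x ^ 2) = a ^ 2 ∧
    (∫ x, ‖gradient w x‖ ^ 2) = (3 * μ / 4) * ∫ x, w x ^ 4

def H1sq (w : E3 → ℝ) : ℝ := ∫ x, (‖gradient w x‖ ^ 2 + w x ^ 2)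

def distH1 (u v : E3 → ℝ) : ℝ :=
  Real.sqrt (∫ x, (‖gradient (fun y => u y - v y) x‖ ^ 2 + (u x - v x) ^ 2))

def Jk {k : ℕ} (β : Fin k → Fin k → ℝ) (u : Fin k → E3 → ℝ) : ℝ :=
  ∫ x, ((1 / 2) * ∑ i, ‖gradient (u i) x‖ ^ 2
    - (1 / 4) * ∑ i, ∑ j, β i j * u i x ^ 2 * u j x ^ 2)

def Gk {k : ℕ} (β : Fin k → Fin k → ℝ) (u : Fin k → E3 → ℝ) : ℝ :=
  (∫ x, ∑ i, ‖gradient (u i) x‖ ^ 2)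
    - (3 / 4) * ∫ x, ∑ i, ∑ j, β i j * u i x ^ 2 * u j x ^ 2

def Rk {k : ℕ} (β : Fin k → Fin k → ℝ) (u : Fin k → E3 → ℝ) : ℝ :=
  8 * (∫ x, ∑ i, ‖gradient (u i) x‖ ^ 2) ^ 3
    / (27 * (∫ x, ∑ i, ∑ j, β i j * u i x ^ 2 * u j x ^ 2) ^ 2)

namespace InH1

variable {w : E3 → ℝ}

lemma integrable_sq (hw : InH1 w) : Integrable (fun x => w x ^ 2) :=
  (memLp_two_iff_integrable_sq hw.1.aestronglyMeasurable).1 hw.1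

lemma integrable_norm_gradient_sq (hw : InH1 w) :
    Integrable (fun x => ‖gradient w x‖ ^ 2) :=
  (memLp_two_iff_integrable_sq_norm hw.2.aestronglyMeasurable).1 hw.2

lemma H1sq_eq (hw : InH1 w) :
    H1sq w = (∫ x, ‖gradient w x‖ ^ 2) + ∫ x, w x ^ 2 :=
  integral_add hw.integrable_norm_gradient_sq hw.integrable_sq

end InH1

section IntegralLemmas

variable {α : Type*} [MeasurableSpace α] {μ : Measure α} {f g : α → ℝ}

/-- Holds also when `g` is not integrable, where the left side is the junk value `0`. -/
lemma integral_sub_le_integral_of_nonneg (hf : Integrable f μ) (hf0 : 0 ≤ f) (hg0 : 0 ≤ g) :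
    ∫ x, (f x - g x) ∂μ ≤ ∫ x, f x ∂μ := by
  by_cases hg : Integrable g μ
  · rw [integral_sub hf hg]
    linarith [integral_nonneg (μ := μ) hg0]
  · have hfg : ¬ Integrable (fun x => f x - g x) μ := fun hfg =>
      hg ((hf.sub hfg).congr (.of_forall fun x => by simp))
    rw [integral_undef hfg]
    exact integral_nonneg hf0

lemma integrable_of_const_mul_le {c : ℝ} (hc : 0 < c) (hg : Integrable g μ)
    (hf : AEStronglyMeasurable f μ) (hf0 : 0 ≤ f) (hle : ∀ x, c * f x ≤ g x) :
    Integrable f μ :=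
  (hg.div_const c).mono' hf <| .of_forall fun x => by
    rw [Real.norm_of_nonneg (hf0 x), le_div_iff₀' hc]
    exact hle x

end IntegralLemmas

section CoupledFunctional

variable {μ₁ μ₂ β : ℝ} {u v : E3 → ℝ}

lemma J2_le_half_integral_gradient (hμ₁ : 0 ≤ μ₁) (hμ₂ : 0 ≤ μ₂) (hβ : 0 ≤ β)
    (hu : InH1 u) (hv : InH1 v) :
    J2 μ₁ μ₂ β u v ≤ (1 / 2) * ∫ x, (‖gradient u x‖ ^ 2 + ‖gradient v x‖ ^ 2) := by
  have hgu := hu.integrable_norm_gradient_sq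
  have hgv := hv.integrable_norm_gradient_sq
  have hJu := integral_sub_le_integral_of_nonneg (hgu.const_mul (1 / 2))
    (fun x => by positivity) (fun x => by positivity : 0 ≤ fun x => μ₁ / 4 * u x ^ 4)
  have hJv := integral_sub_le_integral_of_nonneg (hgv.const_mul (1 / 2))
    (fun x => by positivity) (fun x => by positivity : 0 ≤ fun x => μ₂ / 4 * v x ^ 4)
  have hK : 0 ≤ ∫ x, u x ^ 2 * v x ^ 2 := integral_nonneg fun x => by positivity
  rw [J2, integral_add hgu hgv]
  rw [integral_const_mul] at hJu hJv
  nlinarith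

lemma integrable_quartic_parts (hμ₁ : 0 < μ₁) (hμ₂ : 0 < μ₂) (hβ : 0 < β)
    (hu : AEStronglyMeasurable u) (hv : AEStronglyMeasurable v)
    (hQ : Integrable fun x => μ₁ * u x ^ 4 + 2 * β * u x ^ 2 * v x ^ 2 + μ₂ * v x ^ 4) :
    Integrable (fun x => u x ^ 4) ∧ Integrable (fun x => v x ^ 4) ∧
      Integrable (fun x => u x ^ 2 * v x ^ 2) := by
  refine ⟨integrable_of_const_mul_le hμ₁ hQ (hu.pow 4) (fun x => by positivity) fun x => ?_,
    integrable_of_const_mul_le hμ₂ hQ (hv.pow 4) (fun x => by positivity) fun x => ?_,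
    integrable_of_const_mul_le (by positivity : 0 < 2 * β) hQ ((hu.pow 2).mul (hv.pow 2))
      (fun x => by positivity) fun x => ?_⟩ <;>
  nlinarith [pow_nonneg (sq_nonneg (u x)) 2, pow_nonneg (sq_nonneg (v x)) 2,
    mul_nonneg (sq_nonneg (u x)) (sq_nonneg (v x)), hμ₁, hμ₂, hβ]

lemma six_mul_J2_sub_two_mul_G2 (hu : InH1 u) (hv : InH1 v)
    (hu4 : Integrable fun x => u x ^ 4) (hv4 : Integrable fun x => v x ^ 4)
    (huv : Integrable fun x => u x ^ 2 * v x ^ 2) :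
    6 * J2 μ₁ μ₂ β u v - 2 * G2 μ₁ μ₂ β u v
      = ∫ x, (‖gradient u x‖ ^ 2 + ‖gradient v x‖ ^ 2) := by
  have hgu := hu.integrable_norm_gradient_sq
  have hgv := hv.integrable_norm_gradient_sq
  have hQ : ∫ x, (μ₁ * u x ^ 4 + 2 * β * u x ^ 2 * v x ^ 2 + μ₂ * v x ^ 4)
      = μ₁ * (∫ x, u x ^ 4) + 2 * β * (∫ x, u x ^ 2 * v x ^ 2) + μ₂ * ∫ x, v x ^ 4 := by
    simp_rw [mul_assoc (2 * β)]
    have h12 : Integrable fun x => μ₁ * u x ^ 4 + 2 * β * (u x ^ 2 * v x ^ 2) :=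
      (hu4.const_mul _).add (huv.const_mul _)
    rw [integral_add h12 (hv4.const_mul _),
      integral_add (hu4.const_mul _) (huv.const_mul _),
      integral_const_mul, integral_const_mul, integral_const_mul]
  rw [J2, G2, hQ, integral_sub (hgu.const_mul _) (hu4.const_mul _),
    integral_sub (hgv.const_mul _) (hv4.const_mul _), integral_add hgu hgv]
  simp only [integral_const_mul]
  ring

end CoupledFunctional

lemma tendsto_integral_gradient_of_J2_G2 {μ₁ μ₂ β c : ℝ} (hμ₁ : 0 < μ₁) (hμ₂ : 0 < μ₂)
    (hβ : 0 < β) (hc : 0 < c) {u v : ℕ → E3 → ℝ} (hu : ∀ n, InH1 (u n)) (hv : ∀ n, InH1 (v n))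
    (hJ : Tendsto (fun n => J2 μ₁ μ₂ β (u n) (v n)) atTop (𝓝 c))
    (hG : Tendsto (fun n => G2 μ₁ μ₂ β (u n) (v n)) atTop (𝓝 0)) :
    Tendsto (fun n => ∫ x, (‖gradient (u n) x‖ ^ 2 + ‖gradient (v n) x‖ ^ 2)) atTop
      (𝓝 (6 * c)) := by
  have hvirial : ∀ᶠ n in atTop, 6 * J2 μ₁ μ₂ β (u n) (v n) - 2 * G2 μ₁ μ₂ β (u n) (v n)
      = ∫ x, (‖gradient (u n) x‖ ^ 2 + ‖gradient (v n) x‖ ^ 2) := by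
    have hpos : ∀ᶠ n in atTop, G2 μ₁ μ₂ β (u n) (v n) < 2 * J2 μ₁ μ₂ β (u n) (v n) := by
      have := (hG.sub (hJ.const_mul 2)).eventually (gt_mem_nhds (by linarith : 0 - 2 * c < 0))
      filter_upwards [this] with n hn
      linarith
    filter_upwards [hpos] with n hn
    -- Without a finite quartic integral, `G` would be the whole kinetic energy, hence `≥ 2 J`.
    by_cases hQ : Integrable fun x =>
        μ₁ * u n x ^ 4 + 2 * β * u n x ^ 2 * v n x ^ 2 + μ₂ * v n x ^ 4
    · obtain ⟨hu4, hv4, huv⟩ := integrable_quartic_parts hμ₁ hμ₂ hβ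
        (hu n).1.aestronglyMeasurable (hv n).1.aestronglyMeasurable hQ
      exact six_mul_J2_sub_two_mul_G2 (hu n) (hv n) hu4 hv4 huv
    · have hJle := J2_le_half_integral_gradient hμ₁.le hμ₂.le hβ.le (hu n) (hv n)
      rw [G2, integral_undef hQ] at hn
      linarith
  have hlim : Tendsto (fun n => 6 * J2 μ₁ μ₂ β (u n) (v n) - 2 * G2 μ₁ μ₂ β (u n) (v n))
      atTop (𝓝 (6 * c)) := by
    simpa using (hJ.const_mul 6).sub (hG.const_mul 2)
  exact hlim.congr' hvirial

theorem PS_sequence_bounds_general (a₁ a₂ μ₁ μ₂ β c : ℝ)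
    (hμ₁ : 0 < μ₁) (hμ₂ : 0 < μ₂) (hβ : 0 < β) (hc : 0 < c)
    (u v : ℕ → E3 → ℝ)
    (hmem : ∀ n, InH1 (u n) ∧ IsRadial (u n) ∧ (∫ x, u n x ^ 2) = a₁ ^ 2 ∧
      InH1 (v n) ∧ IsRadial (v n) ∧ (∫ x, v n x ^ 2) = a₂ ^ 2)
    (hJ : Tendsto (fun n => J2 μ₁ μ₂ β (u n) (v n)) atTop (𝓝 c))
    (hG : Tendsto (fun n => G2 μ₁ μ₂ β (u n) (v n)) atTop (𝓝 0)) :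
    (∃ M : ℝ, ∀ n, H1sq (u n) + H1sq (v n) ≤ M) ∧
    ∃ Cb : ℝ, 0 < Cb ∧ ∃ N : ℕ, ∀ n ≥ N,
      Cb ≤ ∫ x, (‖gradient (u n) x‖ ^ 2 + ‖gradient (v n) x‖ ^ 2) := by
  have hu n := (hmem n).1
  have hv n := (hmem n).2.2.2.1
  have hgrad := tendsto_integral_gradient_of_J2_G2 hμ₁ hμ₂ hβ hc hu hv hJ hG
  have hH1 n : H1sq (u n) + H1sq (v n)
      = (∫ x, (‖gradient (u n) x‖ ^ 2 + ‖gradient (v n) x‖ ^ 2)) + a₁ ^ 2 + a₂ ^ 2 := by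
    rw [(hu n).H1sq_eq, (hv n).H1sq_eq, (hmem n).2.2.1, (hmem n).2.2.2.2.2,
      integral_add (hu n).integrable_norm_gradient_sq (hv n).integrable_norm_gradient_sq]
    ring
  constructor
  · obtain ⟨M, hM⟩ := hgrad.bddAbove_range
    exact ⟨M + a₁ ^ 2 + a₂ ^ 2, fun n => by linarith [hH1 n, hM ⟨n, rfl⟩]⟩
  · obtain ⟨N, hN⟩ := eventually_atTop.1
      (hgrad.eventually (lt_mem_nhds (by linarith : 3 * c < 6 * c)))
    exact ⟨3 * c, by positivity, N, fun n hn => (hN n hn).le⟩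

/-- A Palais–Smale-type sequence in `S_{a₁} × S_{a₂}` with `J → c > 0` and
`G → 0` is bounded in `H¹(ℝ³,ℝ²)` and its gradients are bounded away from zero for large `n`. -/
theorem PS_sequence_bounds (a₁ a₂ μ₁ μ₂ β c : ℝ)
    (ha₁ : 0 < a₁) (ha₂ : 0 < a₂) (hμ₁ : 0 < μ₁) (hμ₂ : 0 < μ₂) (hβ : 0 < β) (hc : 0 < c)
    (u v : ℕ → E3 → ℝ)
    (hmem : ∀ n, InH1 (u n) ∧ IsRadial (u n) ∧ (∫ x, u n x ^ 2) = a₁ ^ 2 ∧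
      InH1 (v n) ∧ IsRadial (v n) ∧ (∫ x, v n x ^ 2) = a₂ ^ 2)
    (hJ : Tendsto (fun n => J2 μ₁ μ₂ β (u n) (v n)) atTop (𝓝 c))
    (hG : Tendsto (fun n => G2 μ₁ μ₂ β (u n) (v n)) atTop (𝓝 0)) :
    (∃ M : ℝ, ∀ n, H1sq (u n) + H1sq (v n) ≤ M) ∧
    ∃ Cb : ℝ, 0 < Cb ∧ ∃ N : ℕ, ∀ n ≥ N,
      Cb ≤ ∫ x, (‖gradient (u n) x‖ ^ 2 + ‖gradient (v n) x‖ ^ 2) :=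
  PS_sequence_bounds_general a₁ a₂ μ₁ μ₂ β c hμ₁ hμ₂ hβ hc u v hmem hJ hG
end
end

section
/- Let a₁, a₂, μ₁, μ₂ > 0. There exists β₂ > 0, depending on a₁, a₂, μ₁, μ₂, such that for every β > β₂ one has sup_{s ∈ ℝ} J(s ⋆ w_{a₁,μ₁}, s ⋆ w_{a₂,μ₂}) < min{ℓ(a₁,μ₁), ℓ(a₂,μ₂)}. -/
open MeasureTheory Real Filter Topology

noncomputable section

/-!
Along the dilation path the energy is a polynomial in `t = exp s`:
`J(s ⋆ u, s ⋆ v) = K t² - L t³`, where `K` is the kinetic energy of `(u, v)` and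
`L = μ₁/4 ∫ u⁴ + μ₂/4 ∫ v⁴ + β/2 ∫ u² v²`. Its supremum over `t > 0` is `4 K³ / (27 L²)`.
For the positive profiles `w_{a,μ}` the coupling integral `∫ u² v²` is positive, so `L` grows
linearly in `β` while `K` does not depend on `β`, and the supremum drops below the positive level
`min ℓ(a₁,μ₁) ℓ(a₂,μ₂)` once `β` is large.
-/

theorem integral_pos_of_forall_pos {α : Type*} [MeasurableSpace α] {μ : Measure α} [NeZero μ]
    {f : α → ℝ} (hf : Integrable f μ) (hpos : ∀ x, 0 < f x) : 0 < ∫ x, f x ∂μ := by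
  rw [integral_pos_iff_support_of_nonneg (fun x => (hpos x).le) hf,
    Function.support_eq_univ fun x => (hpos x).ne']
  exact Measure.measure_univ_pos.2 (NeZero.ne μ)

theorem integrable_sq_mul_sq_of_abs_le {α : Type*} [MeasurableSpace α] {μ : Measure α}
    {f g : α → ℝ} (hf : Integrable (fun x => f x ^ 2) μ) (hg : Integrable (fun x => g x ^ 2) μ)
    {C : ℝ} (hC : ∀ x, |g x| ≤ C) : Integrable (fun x => f x ^ 2 * g x ^ 2) μ :=
  hf.mul_bdd hg.aestronglyMeasurable <| ae_of_all _ fun x => by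
    rw [norm_pow, Real.norm_eq_abs]
    exact pow_le_pow_left₀ (abs_nonneg _) (hC x) 2

section Gradient

variable {E : Type*} [NormedAddCommGroup E] [InnerProductSpace ℝ E] [CompleteSpace E]

theorem gradient_const_mul_comp_smul (w : E → ℝ) (B b : ℝ) (x : E) :
    gradient (fun y => B * w (b • y)) x = (B * b) • gradient w (b • x) := by
  have hfun : (fun y => B * w (b • y)) = B • fun y => w (b • y) := rfl
  rw [gradient, hfun, fderiv_const_smul_field, Pi.smul_apply, fderiv_comp_smul, smul_smul,
    map_smul, gradient]

theorem norm_gradient_const_mul_comp_smul_sq (w : E → ℝ) (B b : ℝ) (x : E) :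
    ‖gradient (fun y => B * w (b • y)) x‖ ^ 2 = (B * b) ^ 2 * ‖gradient w (b • x)‖ ^ 2 := by
  rw [gradient_const_mul_comp_smul, norm_smul, mul_pow, Real.norm_eq_abs, sq_abs]

end Gradient

section HaarScaling

variable {E : Type*} [NormedAddCommGroup E] [NormedSpace ℝ E] [FiniteDimensional ℝ E]
  [MeasurableSpace E] [BorelSpace E] {μ : Measure E} [μ.IsAddHaarMeasure]

theorem MeasureTheory.Integrable.const_mul_comp_smul_pow {w : E → ℝ} {n : ℕ}
    (hw : Integrable (fun x => w x ^ n) μ) (B : ℝ) {b : ℝ} (hb : b ≠ 0) :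
    Integrable (fun x => (B * w (b • x)) ^ n) μ := by
  simp only [mul_pow]
  exact (hw.comp_smul hb).const_mul _

variable (μ)

theorem integral_const_mul_comp_smul_pow (w : E → ℝ) (n : ℕ) (B : ℝ) {b : ℝ} (hb : 0 ≤ b) :
    ∫ x, (B * w (b • x)) ^ n ∂μ = B ^ n / b ^ Module.finrank ℝ E * ∫ x, w x ^ n ∂μ := by
  simp only [mul_pow, integral_const_mul,
    Measure.integral_comp_smul_of_nonneg μ (fun x => w x ^ n) b (hR := hb), smul_eq_mul]
  ring

theorem integral_const_mul_comp_smul_sq_mul_sq (w v : E → ℝ) (B : ℝ) {b : ℝ} (hb : 0 ≤ b) :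
    ∫ x, (B * w (b • x)) ^ 2 * (B * v (b • x)) ^ 2 ∂μ
      = B ^ 4 / b ^ Module.finrank ℝ E * ∫ x, w x ^ 2 * v x ^ 2 ∂μ := by
  have h (x : E) : (B * w (b • x)) ^ 2 * (B * v (b • x)) ^ 2
      = B ^ 4 * (w (b • x) ^ 2 * v (b • x) ^ 2) := by ring
  simp only [h, integral_const_mul,
    Measure.integral_comp_smul_of_nonneg μ (fun x => w x ^ 2 * v x ^ 2) b (hR := hb), smul_eq_mul]
  ring

theorem integral_const_mul_comp_smul_sq_mul_sq_pos {w : E → ℝ} {C : ℝ}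
    (hw : Integrable (fun x => w x ^ 2) μ) (hpos : ∀ x, 0 < w x) (hC : ∀ x, w x ≤ C)
    {B₁ B₂ b₁ b₂ : ℝ} (hB₁ : 0 < B₁) (hB₂ : 0 < B₂) (hb₁ : b₁ ≠ 0) (hb₂ : b₂ ≠ 0) :
    0 < ∫ x, (B₁ * w (b₁ • x)) ^ 2 * (B₂ * w (b₂ • x)) ^ 2 ∂μ := by
  refine integral_pos_of_forall_pos (integrable_sq_mul_sq_of_abs_le
    (hw.const_mul_comp_smul_pow _ hb₁) (hw.const_mul_comp_smul_pow _ hb₂) (C := B₂ * C)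
    fun x => ?_) fun x => ?_
  · rw [abs_mul, abs_of_pos hB₂, abs_of_pos (hpos _)]
    exact mul_le_mul_of_nonneg_left (hC _) hB₂.le
  · exact mul_pos (pow_pos (mul_pos hB₁ (hpos _)) 2) (pow_pos (mul_pos hB₂ (hpos _)) 2)

end HaarScaling

section GradientHaarScaling

variable {E : Type*} [NormedAddCommGroup E] [InnerProductSpace ℝ E] [CompleteSpace E]
  [FiniteDimensional ℝ E] [MeasurableSpace E] [BorelSpace E] {μ : Measure E} [μ.IsAddHaarMeasure]

theorem MeasureTheory.Integrable.norm_gradient_const_mul_comp_smul_sq {w : E → ℝ}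
    (hw : Integrable (fun x => ‖gradient w x‖ ^ 2) μ) (B : ℝ) {b : ℝ} (hb : b ≠ 0) :
    Integrable (fun x => ‖gradient (fun y => B * w (b • y)) x‖ ^ 2) μ := by
  simp only [_root_.norm_gradient_const_mul_comp_smul_sq]
  exact (hw.comp_smul hb).const_mul _

variable (μ)

theorem integral_norm_gradient_const_mul_comp_smul_sq (w : E → ℝ) (B : ℝ) {b : ℝ} (hb : 0 ≤ b) :
    ∫ x, ‖gradient (fun y => B * w (b • y)) x‖ ^ 2 ∂μ
      = (B * b) ^ 2 / b ^ Module.finrank ℝ E * ∫ x, ‖gradient w x‖ ^ 2 ∂μ := by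
  simp_rw [norm_gradient_const_mul_comp_smul_sq]
  rw [integral_const_mul,
    Measure.integral_comp_smul_of_nonneg μ (fun x => ‖gradient w x‖ ^ 2) b (hR := hb),
    smul_eq_mul]
  ring

end GradientHaarScaling

theorem mul_sq_sub_mul_cube_le {K L t : ℝ} (hK : 0 ≤ K) (hL : 0 < L) (ht : 0 ≤ t) :
    K * t ^ 2 - L * t ^ 3 ≤ 4 * K ^ 3 / (27 * L ^ 2) := by
  have hfactor : 4 * K ^ 3 - 27 * L ^ 2 * (K * t ^ 2 - L * t ^ 3)
      = (3 * L * t - 2 * K) ^ 2 * (3 * L * t + K) := by ring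
  have hnonneg : 0 ≤ (3 * L * t - 2 * K) ^ 2 * (3 * L * t + K) := by positivity
  rw [le_div_iff₀ (by positivity)]
  linarith

theorem exists_forall_gt_cube_div_sq_lt {K Q D m : ℝ} (hK : 0 ≤ K) (hQ : 0 ≤ Q) (hD : 0 < D)
    (hm : 0 < m) : ∃ β₂ > 0, ∀ β > β₂, 4 * K ^ 3 / (27 * (Q + β / 2 * D) ^ 2) < m := by
  set X := 16 * K ^ 3 / (27 * D ^ 2 * m) with hXdef
  have hX : 0 ≤ X := by positivity
  refine ⟨X + 1, by positivity, fun β hβ => ?_⟩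
  have hβD : 0 < β / 2 * D := by
    have : 0 < β := by linarith
    positivity
  have hβX : X * (27 * D ^ 2 * m) < β ^ 2 * (27 * D ^ 2 * m) := by
    gcongr
    nlinarith
  have hQβ : β / 2 * D ≤ Q + β / 2 * D := le_add_of_nonneg_left hQ
  rw [div_lt_iff₀ (by have := hβD.trans_le hQβ; positivity)]
  calc 4 * K ^ 3 = X * (27 * D ^ 2 * m) / 4 := by rw [hXdef]; field_simp; ring
    _ < β ^ 2 * (27 * D ^ 2 * m) / 4 := by linarith
    _ = 27 * (β / 2 * D) ^ 2 * m := by ring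
    _ ≤ 27 * (Q + β / 2 * D) ^ 2 * m := by gcongr
    _ = m * (27 * (Q + β / 2 * D) ^ 2) := by ring

def J2kin (u v : E3 → ℝ) : ℝ :=
  ((∫ x, ‖gradient u x‖ ^ 2) + ∫ x, ‖gradient v x‖ ^ 2) / 2

def J2pot (μ₁ μ₂ β : ℝ) (u v : E3 → ℝ) : ℝ :=
  μ₁ / 4 * (∫ x, u x ^ 4) + μ₂ / 4 * (∫ x, v x ^ 4) + β / 2 * ∫ x, u x ^ 2 * v x ^ 2

theorem J2_eq_J2kin_sub_J2pot (μ₁ μ₂ β : ℝ) {u v : E3 → ℝ}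
    (hgu : Integrable fun x => ‖gradient u x‖ ^ 2) (hu : Integrable fun x => u x ^ 4)
    (hgv : Integrable fun x => ‖gradient v x‖ ^ 2) (hv : Integrable fun x => v x ^ 4) :
    J2 μ₁ μ₂ β u v = J2kin u v - J2pot μ₁ μ₂ β u v := by
  rw [J2, J2kin, J2pot, integral_sub (hgu.const_mul _) (hu.const_mul _),
    integral_sub (hgv.const_mul _) (hv.const_mul _)]
  simp only [integral_const_mul]
  ring

theorem finrank_E3 : Module.finrank ℝ E3 = 3 := finrank_euclideanSpace_fin

theorem exp_three_mul_div_two_sq (s : ℝ) : Real.exp (3 * s / 2) ^ 2 = Real.exp s ^ 3 := by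
  rw [← Real.exp_nat_mul, ← Real.exp_nat_mul]
  ring_nf

theorem J2kin_sStar (s : ℝ) (u v : E3 → ℝ) :
    J2kin (sStar s u) (sStar s v) = Real.exp s ^ 2 * J2kin u v := by
  unfold J2kin sStar
  simp only [integral_norm_gradient_const_mul_comp_smul_sq volume _ _ (exp_pos s).le,
    finrank_E3, mul_pow, exp_three_mul_div_two_sq]
  field_simp

theorem J2pot_sStar (μ₁ μ₂ β s : ℝ) (u v : E3 → ℝ) :
    J2pot μ₁ μ₂ β (sStar s u) (sStar s v) = Real.exp s ^ 3 * J2pot μ₁ μ₂ β u v := by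
  unfold J2pot sStar
  simp only [integral_const_mul_comp_smul_pow volume _ _ _ (exp_pos s).le,
    integral_const_mul_comp_smul_sq_mul_sq volume _ _ _ (exp_pos s).le, finrank_E3,
    show Real.exp (3 * s / 2) ^ 4 = (Real.exp (3 * s / 2) ^ 2) ^ 2 by ring,
    exp_three_mul_div_two_sq]
  field_simp

theorem J2_sStar (μ₁ μ₂ β s : ℝ) {u v : E3 → ℝ}
    (hgu : Integrable fun x => ‖gradient u x‖ ^ 2) (hu : Integrable fun x => u x ^ 4)
    (hgv : Integrable fun x => ‖gradient v x‖ ^ 2) (hv : Integrable fun x => v x ^ 4) :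
    J2 μ₁ μ₂ β (sStar s u) (sStar s v)
      = J2kin u v * Real.exp s ^ 2 - J2pot μ₁ μ₂ β u v * Real.exp s ^ 3 := by
  have hexp := (exp_pos s).ne'
  rw [J2_eq_J2kin_sub_J2pot (u := sStar s u) (v := sStar s v) μ₁ μ₂ β
    (hgu.norm_gradient_const_mul_comp_smul_sq _ hexp) (hu.const_mul_comp_smul_pow _ hexp)
    (hgv.norm_gradient_const_mul_comp_smul_sq _ hexp) (hv.const_mul_comp_smul_pow _ hexp),
    J2kin_sStar, J2pot_sStar]
  ring

theorem J2kin_nonneg (u v : E3 → ℝ) : 0 ≤ J2kin u v := by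
  unfold J2kin
  have : 0 ≤ ∫ x, ‖gradient u x‖ ^ 2 := integral_nonneg fun x => by positivity
  have : 0 ≤ ∫ x, ‖gradient v x‖ ^ 2 := integral_nonneg fun x => by positivity
  positivity

theorem sSup_J2_sStar_le (μ₁ μ₂ β : ℝ) {u v : E3 → ℝ}
    (hgu : Integrable fun x => ‖gradient u x‖ ^ 2) (hu : Integrable fun x => u x ^ 4)
    (hgv : Integrable fun x => ‖gradient v x‖ ^ 2) (hv : Integrable fun x => v x ^ 4)
    (hpot : 0 < J2pot μ₁ μ₂ β u v) :
    sSup {c : ℝ | ∃ s : ℝ, c = J2 μ₁ μ₂ β (sStar s u) (sStar s v)}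
      ≤ 4 * J2kin u v ^ 3 / (27 * J2pot μ₁ μ₂ β u v ^ 2) := by
  refine Real.sSup_le ?_ (by have := J2kin_nonneg u v; positivity)
  rintro c ⟨s, rfl⟩
  rw [J2_sStar μ₁ μ₂ β s hgu hu hgv hv]
  exact mul_sq_sub_mul_cube_le (J2kin_nonneg u v) hpot (exp_pos s).le

theorem exists_sSup_J2_sStar_lt {μ₁ μ₂ m : ℝ} (hμ₁ : 0 ≤ μ₁) (hμ₂ : 0 ≤ μ₂) (hm : 0 < m)
    {u v : E3 → ℝ}
    (hgu : Integrable fun x => ‖gradient u x‖ ^ 2) (hu : Integrable fun x => u x ^ 4)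
    (hgv : Integrable fun x => ‖gradient v x‖ ^ 2) (hv : Integrable fun x => v x ^ 4)
    (huv : 0 < ∫ x, u x ^ 2 * v x ^ 2) :
    ∃ β₂ > 0, ∀ β > β₂,
      sSup {c : ℝ | ∃ s : ℝ, c = J2 μ₁ μ₂ β (sStar s u) (sStar s v)} < m := by
  have hQ : 0 ≤ μ₁ / 4 * (∫ x, u x ^ 4) + μ₂ / 4 * ∫ x, v x ^ 4 := by
    have : 0 ≤ ∫ x, u x ^ 4 := integral_nonneg fun x => by positivity
    have : 0 ≤ ∫ x, v x ^ 4 := integral_nonneg fun x => by positivity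
    positivity
  obtain ⟨β₂, hβ₂, hlt⟩ := exists_forall_gt_cube_div_sq_lt (J2kin_nonneg u v) hQ huv hm
  refine ⟨β₂, hβ₂, fun β hβ => ?_⟩
  have hpot : 0 < J2pot μ₁ μ₂ β u v := by
    have : 0 < β := hβ₂.trans hβ
    unfold J2pot
    positivity
  exact (sSup_J2_sStar_le μ₁ μ₂ β hgu hu hgv hv hpot).trans_lt (hlt β hβ)

/-- For `β` larger than some `β₂ > 0`, the supremum over `s ∈ ℝ` of
`J(s ⋆ w_{a₁,μ₁}, s ⋆ w_{a₂,μ₂})` is strictly smaller than `min{ℓ(a₁,μ₁), ℓ(a₂,μ₂)}`. -/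
theorem sup_along_dilations_below_min (a₁ a₂ μ₁ μ₂ : ℝ)
    (ha₁ : 0 < a₁) (ha₂ : 0 < a₂) (hμ₁ : 0 < μ₁) (hμ₂ : 0 < μ₂)
    (w0 : E3 → ℝ) (hw0 : IsW0 w0) :
    ∃ β₂ : ℝ, 0 < β₂ ∧ ∀ β : ℝ, β₂ < β →
      sSup {c : ℝ | ∃ s : ℝ,
          c = J2 μ₁ μ₂ β (sStar s (wStar (∫ x, w0 x ^ 2) a₁ μ₁ w0))
            (sStar s (wStar (∫ x, w0 x ^ 2) a₂ μ₂ w0))} <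
        min (ell w0 a₁ μ₁) (ell w0 a₂ μ₂) := by
  obtain ⟨⟨hw2, hwg⟩, -, hpos, hmax, -⟩ := hw0
  have hbdd (x : E3) : |w0 x| ≤ w0 0 := (abs_of_pos (hpos x)).trans_le (hmax x)
  have hsq : Integrable fun x => w0 x ^ 2 := hw2.integrable_sq
  have hgrad : Integrable fun x => ‖gradient w0 x‖ ^ 2 :=
    (memLp_two_iff_integrable_sq_norm hwg.1).1 hwg
  have hquart : Integrable fun x => w0 x ^ 4 := by
    simpa only [← pow_add] using integrable_sq_mul_sq_of_abs_le hsq hsq hbdd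
  have hC₀ : 0 < ∫ x, w0 x ^ 2 := integral_pos_of_forall_pos hsq fun x => pow_pos (hpos x) 2
  have hC₁ : 0 < ∫ x, w0 x ^ 4 := integral_pos_of_forall_pos hquart fun x => pow_pos (hpos x) 4
  have hscale {a μ : ℝ} (ha : 0 < a) (hμ : 0 < μ) :
      0 < (∫ x, w0 x ^ 2) / (μ ^ ((3 : ℝ) / 2) * a ^ 2) ∧ 0 < (∫ x, w0 x ^ 2) / (μ * a ^ 2) :=
    ⟨by positivity, by positivity⟩
  obtain ⟨hB₁, hb₁⟩ := hscale ha₁ hμ₁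
  obtain ⟨hB₂, hb₂⟩ := hscale ha₂ hμ₂
  have hcross := integral_const_mul_comp_smul_sq_mul_sq_pos volume hsq hpos hmax hB₁ hB₂
    hb₁.ne' hb₂.ne'
  exact exists_sSup_J2_sStar_lt hμ₁.le hμ₂.le
    (lt_min (by unfold ell; positivity) (by unfold ell; positivity))
    (hgrad.norm_gradient_const_mul_comp_smul_sq _ hb₁.ne')
    (hquart.const_mul_comp_smul_pow _ hb₁.ne')
    (hgrad.norm_gradient_const_mul_comp_smul_sq _ hb₂.ne')
    (hquart.const_mul_comp_smul_pow _ hb₂.ne') hcross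
end
end
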